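/- arXiv:2511.17723 — 3 statements merged into one kernel-verified Lean document; each statement's English description precedes it below -/
import Mathlib

section
/- Every representation φ = (φ_1,…,φ_n) of the equioriented A_{n+1} quiver on finite-dimensional complex vector spaces V_0,…,V_n is isomorphic to a direct sum ⊕_{0≤p≤q≤n} I_{p,q}^{⊕ s_{pq}} for some array of natural numbers s = (s_{pq})_{0≤p≤q≤n}; that is, there exists an isomorphism of representations (a morphism all of whose components are linear isomorphisms) between φ and this direct sum. -/
/-- The space of representations of the equioriented `A_{n+1}` quiver on `V 0, …, V n`:
tuples of linear maps `φ i : V i →ₗ V (i+1)` for `0 ≤ i < n`. -/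
abbrev HomSp (n : ℕ) (V : ℕ → Type*) [∀ i, AddCommGroup (V i)] [∀ i, Module ℂ (V i)] : Type _ :=
  ∀ i : Fin n, V (i : ℕ) →ₗ[ℂ] V ((i : ℕ) + 1)


/-- The `k`-th vector space of the indecomposable representation `I_{p,q}` of the
equioriented `A_{n+1}` quiver: a copy of `ℂ` (as the full submodule of `ℂ`) for
`p ≤ k ≤ q`, and the zero space otherwise. -/
noncomputable def IpqSp (p q k : ℕ) : Submodule ℂ ℂ :=
  if p ≤ k ∧ k ≤ q then ⊤ else ⊥

/-- The structure map `I_{p,q}(k) → I_{p,q}(k+1)`: the identity map between consecutive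
copies of `ℂ`, and the zero map otherwise. -/
noncomputable def IpqMap (p q k : ℕ) : IpqSp p q k →ₗ[ℂ] IpqSp p q (k + 1) :=
  LinearMap.codRestrict _
    (if p ≤ k + 1 ∧ k + 1 ≤ q then (IpqSp p q k).subtype else 0)
    (by
      intro x
      split_ifs with h
      · simp [IpqSp, h]
      · simp)

/-- The index type for the direct sum `⊕_{0 ≤ p ≤ q ≤ n} I_{p,q}^{⊕ s p q}`: pairs
`(p, q)` with `p ≤ q ≤ n` together with a copy index in `Fin (s p q)`. -/
abbrev LIdx (n : ℕ) (s : ℕ → ℕ → ℕ) : Type :=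
  Σ pq : {pq : ℕ × ℕ // pq.1 ≤ pq.2 ∧ pq.2 ≤ n}, Fin (s pq.1.1 pq.1.2)

/-- The `k`-th vector space of the direct sum representation
`⊕_{0 ≤ p ≤ q ≤ n} I_{p,q}^{⊕ s p q}` of the equioriented `A_{n+1}` quiver. -/
abbrev LaceSpace (n : ℕ) (s : ℕ → ℕ → ℕ) (k : ℕ) : Type :=
  ∀ x : LIdx n s, IpqSp x.1.1.1 x.1.1.2 k

/-- The `k`-th structure map of the direct sum representation
`⊕_{0 ≤ p ≤ q ≤ n} I_{p,q}^{⊕ s p q}`, acting componentwise. -/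
noncomputable def laceMap (n : ℕ) (s : ℕ → ℕ → ℕ) (k : ℕ) :
    LaceSpace n s k →ₗ[ℂ] LaceSpace n s (k + 1) :=
  LinearMap.pi fun x => (IpqMap x.1.1.1 x.1.1.2 k).comp (LinearMap.proj x)

/-! By induction on the total dimension. Let `q` be the last vertex with `V q ≠ 0` and `p` the
first vertex whose composite map to `V q` is nonzero. A vector `v ∈ V p` with nonzero image in
`V q` spans, together with its images, a copy of `I_{p,q}`. Pulling a complement of the image of
`v` in `V q` back along the composite maps gives a complementary subrepresentation: it is stable
under `V (p - 1) → V p` because the composite `V (p - 1) → V q` vanishes. -/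

open Module

section

variable {R : Type*} [Semiring R] {V : ℕ → Type*} {W : ℕ → Type*} {X : ℕ → Type*}
  [∀ k, AddCommMonoid (V k)] [∀ k, Module R (V k)] [∀ k, AddCommMonoid (W k)]
  [∀ k, Module R (W k)] [∀ k, AddCommMonoid (X k)] [∀ k, Module R (X k)] {n : ℕ}

/-- A representation of the equioriented quiver on `0, …, n` is modelled by an `ℕ`-indexed chain
of linear maps, of which only the vertices `k ≤ n` and the arrows `i < n` are seen. -/
def RepIso (n : ℕ) (Φ : ∀ k, V k →ₗ[R] V (k + 1)) (Ψ : ∀ k, W k →ₗ[R] W (k + 1)) : Prop :=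
  ∃ e : ∀ k : Fin (n + 1), V (k : ℕ) ≃ₗ[R] W (k : ℕ),
    ∀ i : Fin n, (Ψ i).comp (e i.castSucc).toLinearMap = (e i.succ).toLinearMap.comp (Φ i)

namespace RepIso

theorem refl (Φ : ∀ k, V k →ₗ[R] V (k + 1)) : RepIso n Φ Φ :=
  ⟨fun _ => LinearEquiv.refl R _, fun _ => rfl⟩

theorem symm {Φ : ∀ k, V k →ₗ[R] V (k + 1)} {Ψ : ∀ k, W k →ₗ[R] W (k + 1)}
    (h : RepIso n Φ Ψ) : RepIso n Ψ Φ := by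
  obtain ⟨e, he⟩ := h
  refine ⟨fun k => (e k).symm, fun i => LinearMap.ext fun x => (e i.succ).injective ?_⟩
  simpa using (LinearMap.congr_fun (he i) ((e i.castSucc).symm x)).symm

theorem trans {Φ : ∀ k, V k →ₗ[R] V (k + 1)} {Ψ : ∀ k, W k →ₗ[R] W (k + 1)}
    {Θ : ∀ k, X k →ₗ[R] X (k + 1)} (h₁ : RepIso n Φ Ψ) (h₂ : RepIso n Ψ Θ) :
    RepIso n Φ Θ := by
  obtain ⟨e₁, he₁⟩ := h₁
  obtain ⟨e₂, he₂⟩ := h₂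
  refine ⟨fun k => (e₁ k).trans (e₂ k), fun i => ?_⟩
  simp only [LinearEquiv.coe_trans, ← LinearMap.comp_assoc, he₂ i]
  rw [LinearMap.comp_assoc, he₁ i, LinearMap.comp_assoc]

theorem prodMap {V' : ℕ → Type*} {W' : ℕ → Type*} [∀ k, AddCommMonoid (V' k)]
    [∀ k, Module R (V' k)] [∀ k, AddCommMonoid (W' k)] [∀ k, Module R (W' k)]
    {Φ : ∀ k, V k →ₗ[R] V (k + 1)} {Ψ : ∀ k, W k →ₗ[R] W (k + 1)}
    {Φ' : ∀ k, V' k →ₗ[R] V' (k + 1)} {Ψ' : ∀ k, W' k →ₗ[R] W' (k + 1)}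
    (h : RepIso n Φ Ψ) (h' : RepIso n Φ' Ψ') :
    RepIso n (fun k => (Φ k).prodMap (Φ' k)) (fun k => (Ψ k).prodMap (Ψ' k)) := by
  obtain ⟨e, he⟩ := h
  obtain ⟨e', he'⟩ := h'
  refine ⟨fun k => (e k).prodCongr (e' k), fun i => LinearMap.ext fun x => ?_⟩
  simpa using ⟨LinearMap.congr_fun (he i) x.1, LinearMap.congr_fun (he' i) x.2⟩

theorem of_subsingleton (Φ : ∀ k, V k →ₗ[R] V (k + 1)) (Ψ : ∀ k, W k →ₗ[R] W (k + 1))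
    (hV : ∀ k ≤ n, Subsingleton (V k)) (hW : ∀ k ≤ n, Subsingleton (W k)) : RepIso n Φ Ψ :=
  ⟨fun k => have := hV k k.is_le; have := hW k k.is_le; LinearEquiv.ofSubsingleton _ _,
    fun i => LinearMap.ext fun _ => (hW _ i.succ.is_le).elim _ _⟩

end RepIso

end

theorem RepIso.of_isCompl {R : Type*} [Ring R] {A : ℕ → Type*} {V : ℕ → Type*}
    [∀ k, AddCommGroup (A k)] [∀ k, Module R (A k)] [∀ k, AddCommGroup (V k)]
    [∀ k, Module R (V k)] {n : ℕ} {Ψ : ∀ k, A k →ₗ[R] A (k + 1)} {Φ : ∀ k, V k →ₗ[R] V (k + 1)}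
    (f : ∀ k, A k →ₗ[R] V k) (hf : ∀ i : Fin n, (Φ i).comp (f i) = (f (i + 1)).comp (Ψ i))
    (hf_inj : ∀ k, Function.Injective (f k)) {U : ∀ k, Submodule R (V k)}
    (hU : ∀ k, ∀ x ∈ U k, Φ k x ∈ U (k + 1))
    (hc : ∀ k ≤ n, IsCompl (LinearMap.range (f k)) (U k)) :
    RepIso n (fun k => (Ψ k).prodMap ((Φ k).restrict (hU k))) Φ := by
  refine ⟨fun k => ((LinearEquiv.ofInjective (f k) (hf_inj k)).prodCongr
    (LinearEquiv.refl R _)).trans (Submodule.prodEquivOfIsCompl _ _ (hc k k.is_le)),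
    fun i => LinearMap.ext fun x => ?_⟩
  simpa using LinearMap.congr_fun (hf i) x.1

theorem Submodule.isCompl_span_singleton_comap {K M N : Type*} [DivisionRing K] [AddCommGroup M]
    [Module K M] [AddCommGroup N] [Module K N] {f : M →ₗ[K] N} {x : M} {U : Submodule K N}
    (h : IsCompl (K ∙ f x) U) (hx : f x ≠ 0) : IsCompl (K ∙ x) (U.comap f) := by
  refine ⟨?_, Submodule.codisjoint_iff_exists_add_eq.mpr fun y => ?_⟩
  · rw [disjoint_comm, Submodule.disjoint_span_singleton' (by rintro rfl; simp at hx)]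
    exact (Submodule.disjoint_span_singleton' hx).mp h.disjoint.symm
  · obtain ⟨a, u, ha, hu, hau⟩ := Submodule.codisjoint_iff_exists_add_eq.mp h.codisjoint (f y)
    obtain ⟨c, rfl⟩ := Submodule.mem_span_singleton.mp ha
    refine ⟨c • x, y - c • x, Submodule.smul_mem _ _ (Submodule.mem_span_singleton_self x), ?_,
      add_sub_cancel _ _⟩
    simpa [← hau] using hu

section ComapTo

variable {R : Type*} [Semiring R] {V : ℕ → Type*} [∀ k, AddCommMonoid (V k)]
  [∀ k, Module R (V k)] (Φ : ∀ k, V k →ₗ[R] V (k + 1)) {q : ℕ}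

/-- The preimage of `W ≤ V q` at a vertex `k ≤ q` under the composite `V k → V q` of the chain;
`⊤` at the vertices `k > q`. -/
noncomputable def comapTo (q : ℕ) (W : Submodule R (V q)) (k : ℕ) : Submodule R (V k) :=
  if k < q then (comapTo q W (k + 1)).comap (Φ k)
  else if h' : k = q then h' ▸ W else ⊤
termination_by q - k

variable {Φ} {W W' : Submodule R (V q)} {k : ℕ}

theorem comapTo_of_lt (h : k < q) : comapTo Φ q W k = (comapTo Φ q W (k + 1)).comap (Φ k) := by
  rw [comapTo, if_pos h]

@[simp]
theorem comapTo_self : comapTo Φ q W q = W := by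
  rw [comapTo]; simp

theorem comapTo_of_gt (h : q < k) : comapTo Φ q W k = ⊤ := by
  rw [comapTo]; simp [show ¬k < q by omega, show k ≠ q by omega]

theorem comapTo_mono (hW : W ≤ W') (k : ℕ) : comapTo Φ q W k ≤ comapTo Φ q W' k := by
  rcases lt_or_ge q k with hqk | hkq
  · simp [comapTo_of_gt hqk]
  induction hkq using Nat.decreasingInduction with
  | self => simpa using hW
  | of_succ k hk ih => simpa only [comapTo_of_lt hk] using Submodule.comap_mono ih

theorem map_mem_comapTo {x : V k} (hx : x ∈ comapTo Φ q W k) :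
    Φ k x ∈ comapTo Φ q W (k + 1) := by
  rcases lt_or_ge k q with hkq | hqk
  · rwa [comapTo_of_lt hkq] at hx
  · simp [comapTo_of_gt (Nat.lt_succ_of_le hqk)]

end ComapTo

section Chain

variable {R : Type*} [Semiring R] {V : ℕ → Type*} [∀ k, AddCommMonoid (V k)]
  [∀ k, Module R (V k)] (Φ : ∀ k, V k →ₗ[R] V (k + 1))

/-- The images of `v ∈ V p` along the chain, extended by `0` below `p`. -/
noncomputable def chainFrom (p : ℕ) (v : V p) : ∀ k, V k
  | 0 => if h : 0 = p then h ▸ v else 0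
  | k + 1 => if h : k + 1 = p then h ▸ v else Φ k (chainFrom p v k)

variable {Φ} {p q k : ℕ} {v : V p}

@[simp]
theorem chainFrom_self : chainFrom Φ p v p = v := by
  cases p <;> simp [chainFrom]

theorem chainFrom_succ (h : p ≤ k) : chainFrom Φ p v (k + 1) = Φ k (chainFrom Φ p v k) := by
  simp [chainFrom, show k + 1 ≠ p by omega]

theorem chainFrom_of_lt (h : k < p) : chainFrom Φ p v k = 0 := by
  induction k with
  | zero => simp [chainFrom, show 0 ≠ p by omega]
  | succ k ih => simp [chainFrom, show k + 1 ≠ p by omega, ih (by omega)]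

theorem chainFrom_notMem_comapTo {W : Submodule R (V q)} (hv : v ∉ comapTo Φ q W p)
    (hpk : p ≤ k) (hkq : k ≤ q) : chainFrom Φ p v k ∉ comapTo Φ q W k := by
  induction k, hpk using Nat.le_induction with
  | base => simpa using hv
  | succ k hpk ih =>
    rw [chainFrom_succ hpk]
    simpa [comapTo_of_lt (show k < q by omega)] using ih (by omega)

end Chain

theorem isCompl_span_chainFrom_comapTo {K : Type*} [DivisionRing K] {V : ℕ → Type*}
    [∀ k, AddCommGroup (V k)] [∀ k, Module K (V k)] {Φ : ∀ k, V k →ₗ[K] V (k + 1)}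
    {p q k : ℕ} {v : V p} {U : Submodule K (V q)} (hv : v ∉ comapTo Φ q ⊥ p)
    (hU : IsCompl (K ∙ chainFrom Φ p v q) U) (hpk : p ≤ k) (hkq : k ≤ q) :
    IsCompl (K ∙ chainFrom Φ p v k) (comapTo Φ q U k) := by
  induction hkq using Nat.decreasingInduction with
  | self => simpa using hU
  | of_succ k hkq ih =>
    have hne : Φ k (chainFrom Φ p v k) ≠ 0 := by
      rw [← chainFrom_succ hpk]
      intro h
      apply chainFrom_notMem_comapTo hv (k := k + 1) (by omega) hkq
      rw [h]
      exact Submodule.zero_mem _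
    have ih := ih (by omega)
    rw [chainFrom_succ hpk] at ih
    rw [comapTo_of_lt hkq]
    exact Submodule.isCompl_span_singleton_comap ih hne

section Ipq

variable {p q k : ℕ}

theorem IpqSp_eq_top (h : p ≤ k ∧ k ≤ q) : IpqSp p q k = ⊤ := if_pos h

theorem IpqSp_eq_bot (h : ¬(p ≤ k ∧ k ≤ q)) : IpqSp p q k = ⊥ := if_neg h

theorem coe_IpqMap_apply (z : IpqSp p q k) :
    (IpqMap p q k z : ℂ) = if p ≤ k + 1 ∧ k + 1 ≤ q then (z : ℂ) else 0 := by
  unfold IpqMap; split_ifs <;> simp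

variable {V : ℕ → Type*} [∀ k, AddCommGroup (V k)] [∀ k, Module ℂ (V k)] {w : ∀ k, V k}

noncomputable def ipqToChain (p q : ℕ) (w : ∀ k, V k) (k : ℕ) : IpqSp p q k →ₗ[ℂ] V k :=
  (LinearMap.toSpanSingleton ℂ (V k) (w k)).comp (IpqSp p q k).subtype

theorem ipqToChain_comp {n : ℕ} {Φ : ∀ k, V k →ₗ[ℂ] V (k + 1)}
    (hw_succ : ∀ k, p ≤ k → Φ k (w k) = w (k + 1)) (hw_zero : ∀ k ≤ n, q < k → w k = 0)
    (i : Fin n) :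
    (Φ i).comp (ipqToChain p q w i) = (ipqToChain p q w (i + 1)).comp (IpqMap p q i) := by
  refine LinearMap.ext fun z => ?_
  simp only [ipqToChain, LinearMap.comp_apply, Submodule.subtype_apply,
    LinearMap.toSpanSingleton_apply, map_smul, coe_IpqMap_apply]
  by_cases hpi : p ≤ i
  · rw [hw_succ i hpi]
    split_ifs with h
    · rfl
    · rw [hw_zero (i + 1) i.isLt (by omega), smul_zero, smul_zero]
  · have hz : (z : ℂ) = 0 := by
      simpa [IpqSp_eq_bot (show ¬(p ≤ i ∧ (i : ℕ) ≤ q) by omega)] using z.2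
    simp [hz]

theorem ipqToChain_injective (hw : ∀ k, p ≤ k → k ≤ q → w k ≠ 0) (k : ℕ) :
    Function.Injective (ipqToChain p q w k) := by
  intro a b hab
  by_cases h : p ≤ k ∧ k ≤ q
  · exact Subtype.ext (smul_left_injective ℂ (hw k h.1 h.2) hab)
  · have ha := a.2
    have hb := b.2
    simp only [IpqSp_eq_bot h, Submodule.mem_bot] at ha hb
    exact Subtype.ext (ha.trans hb.symm)

theorem range_ipqToChain (hw : ¬(p ≤ k ∧ k ≤ q) → w k = 0) :
    LinearMap.range (ipqToChain p q w k) = ℂ ∙ w k := by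
  rw [ipqToChain, LinearMap.range_comp, Submodule.range_subtype]
  by_cases h : p ≤ k ∧ k ≤ q
  · rw [IpqSp_eq_top h, Submodule.map_top, LinearMap.range_toSpanSingleton]
  · rw [IpqSp_eq_bot h, Submodule.map_bot, hw h, Submodule.span_zero_singleton]

end Ipq

section Lace

/-- The multiplicities `s` with one more copy of `I_{p,q}`. -/
def incr (p q : ℕ) (s : ℕ → ℕ → ℕ) (a b : ℕ) : ℕ :=
  if a = p ∧ b = q then s a b + 1 else s a b

theorem le_incr (p q : ℕ) (s : ℕ → ℕ → ℕ) (a b : ℕ) : s a b ≤ incr p q s a b := by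
  unfold incr; split_ifs <;> omega

variable {n p q : ℕ} (hpq : p ≤ q) (hqn : q ≤ n) (s : ℕ → ℕ → ℕ)

def LIdx.last : LIdx n (incr p q s) :=
  ⟨⟨(p, q), hpq, hqn⟩, ⟨s p q, by simp [incr]⟩⟩

def LIdx.castIncr (p q : ℕ) (x : LIdx n s) : LIdx n (incr p q s) :=
  ⟨x.1, Fin.castLE (le_incr p q s _ _) x.2⟩

theorem LIdx.eq_last_of_not_lt {x : LIdx n (incr p q s)} (h : ¬(x.2 : ℕ) < s x.1.1.1 x.1.1.2) :
    x = LIdx.last hpq hqn s := by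
  obtain ⟨⟨⟨a, b⟩, hab⟩, j⟩ := x
  have hj : (j : ℕ) < incr p q s a b := j.isLt
  have hj' : ¬(j : ℕ) < s a b := h
  obtain ⟨rfl, rfl⟩ : a = p ∧ b = q := by
    by_contra hne
    simp only [incr, if_neg hne] at hj
    exact hj' hj
  simp only [incr, and_self, if_true] at hj
  exact Sigma.ext rfl (heq_of_eq (Fin.ext (show (j : ℕ) = s a b by omega)))

/-- Commutes with `laceMap` definitionally, since `laceMap` acts componentwise. -/
noncomputable def laceSpaceIncrEquiv (k : ℕ) :
    LaceSpace n (incr p q s) k ≃ₗ[ℂ] IpqSp p q k × LaceSpace n s k where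
  toFun g := (g (LIdx.last hpq hqn s), fun x => g (LIdx.castIncr s p q x))
  map_add' _ _ := rfl
  map_smul' _ _ := rfl
  invFun g x :=
    if h : (x.2 : ℕ) < s x.1.1.1 x.1.1.2 then g.2 ⟨x.1, ⟨x.2, h⟩⟩
    else ⟨g.1, LIdx.eq_last_of_not_lt hpq hqn s h ▸ g.1.2⟩
  left_inv g := by
    funext x
    by_cases h : (x.2 : ℕ) < s x.1.1.1 x.1.1.2
    · exact dif_pos h
    · obtain rfl := LIdx.eq_last_of_not_lt hpq hqn s h
      exact (dif_neg h).trans rfl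
  right_inv g := by
    refine Prod.ext ((dif_neg (lt_irrefl (s p q))).trans rfl) (funext fun x => ?_)
    exact dif_pos x.2.isLt

end Lace

theorem repIso_laceMap_incr {n p q : ℕ} (hpq : p ≤ q) (hqn : q ≤ n) (s : ℕ → ℕ → ℕ) :
    RepIso n (fun k => (IpqMap p q k).prodMap (laceMap n s k)) (laceMap n (incr p q s)) :=
  RepIso.symm ⟨fun k => laceSpaceIncrEquiv hpq hqn s k, fun _ => rfl⟩

theorem exists_extremal_chain {R : Type*} [Semiring R] {V : ℕ → Type*}
    [∀ k, AddCommMonoid (V k)] [∀ k, Module R (V k)] (Φ : ∀ k, V k →ₗ[R] V (k + 1)) {n : ℕ}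
    (hV : ∃ k ≤ n, Nontrivial (V k)) :
    ∃ p q, p ≤ q ∧ q ≤ n ∧ (∀ k ≤ n, q < k → Subsingleton (V k)) ∧
      (∀ k < p, comapTo Φ q ⊥ k = ⊤) ∧ ∃ v : V p, v ∉ comapTo Φ q ⊥ p := by
  classical
  obtain ⟨k₀, hk₀n, hk₀⟩ := hV
  set q := Nat.findGreatest (fun k => Nontrivial (V k)) n
  have hq : Nontrivial (V q) := Nat.findGreatest_spec (P := fun k => Nontrivial (V k)) hk₀n hk₀
  have hN : ∃ k, comapTo Φ q ⊥ k ≠ ⊤ := ⟨q, by simp⟩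
  obtain ⟨v, -, hv⟩ := SetLike.exists_of_lt (lt_top_iff_ne_top.mpr (Nat.find_spec hN))
  exact ⟨Nat.find hN, q, Nat.find_min' hN (by simp), Nat.findGreatest_le n,
    fun k hkn hqk => not_nontrivial_iff_subsingleton.mp (Nat.findGreatest_is_greatest hqk hkn),
    fun k hk => not_not.mp (Nat.find_min hN hk), v, hv⟩

theorem exists_repIso_IpqMap_prodMap {V : ℕ → Type*} [∀ k, AddCommGroup (V k)]
    [∀ k, Module ℂ (V k)] {n : ℕ} (Φ : ∀ k, V k →ₗ[ℂ] V (k + 1))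
    (hV : ∃ k ≤ n, Nontrivial (V k)) :
    ∃ p q, p ≤ q ∧ q ≤ n ∧ ∃ U : ∀ k, Submodule ℂ (V k),
      ∃ hU : ∀ k, ∀ x ∈ U k, Φ k x ∈ U (k + 1), U q ≠ ⊤ ∧
        RepIso n (fun k => (IpqMap p q k).prodMap ((Φ k).restrict (hU k))) Φ := by
  obtain ⟨p, q, hpq, hqn, hgt, hlt, v, hv⟩ := exists_extremal_chain Φ hV
  have hw_ne : ∀ k, p ≤ k → k ≤ q → chainFrom Φ p v k ≠ 0 := fun k hpk hkq h =>
    chainFrom_notMem_comapTo hv hpk hkq (h ▸ Submodule.zero_mem _)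
  have hw_zero : ∀ k ≤ n, ¬(p ≤ k ∧ k ≤ q) → chainFrom Φ p v k = 0 := by
    intro k hkn hk
    rcases lt_or_ge k p with hkp | hpk
    · exact chainFrom_of_lt hkp
    · exact (hgt k hkn (by omega)).elim _ _
  obtain ⟨Uq, hUq⟩ := Submodule.exists_isCompl (ℂ ∙ chainFrom Φ p v q)
  have hc : ∀ k ≤ n,
      IsCompl (LinearMap.range (ipqToChain p q (chainFrom Φ p v) k)) (comapTo Φ q Uq k) := by
    intro k hkn
    rw [range_ipqToChain (hw_zero k hkn)]
    rcases lt_or_ge k p with hkp | hpk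
    · rw [chainFrom_of_lt hkp, Submodule.span_zero_singleton,
        eq_top_iff.mpr ((hlt k hkp).ge.trans (comapTo_mono bot_le k))]
      exact isCompl_bot_top
    rcases le_or_gt k q with hkq | hqk
    · exact isCompl_span_chainFrom_comapTo hv hUq hpk hkq
    · have := (Submodule.subsingleton_iff ℂ).mpr (hgt k hkn hqk)
      exact ⟨disjoint_of_subsingleton, codisjoint_iff.mpr (Subsingleton.elim _ _)⟩
  refine ⟨p, q, hpq, hqn, comapTo Φ q Uq, fun k x hx => map_mem_comapTo hx, ?_,
    RepIso.of_isCompl (ipqToChain p q (chainFrom Φ p v))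
      (ipqToChain_comp (fun k hk => (chainFrom_succ hk).symm)
        (fun k hkn hqk => hw_zero k hkn (by omega)))
      (ipqToChain_injective hw_ne) _ hc⟩
  rw [comapTo_self]
  rintro hUq_top
  have hwq : chainFrom Φ p v q ∉ Uq :=
    (Submodule.disjoint_span_singleton' (hw_ne q hpq le_rfl)).mp hUq.disjoint.symm
  exact hwq (hUq_top ▸ Submodule.mem_top)

theorem exists_repIso_laceMap {V : ℕ → Type*} [∀ k, AddCommGroup (V k)]
    [∀ k, Module ℂ (V k)] [∀ k, FiniteDimensional ℂ (V k)] (n : ℕ)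
    (Φ : ∀ k, V k →ₗ[ℂ] V (k + 1)) : ∃ s, RepIso n Φ (laceMap n s) := by
  by_cases hV : ∀ k ≤ n, Subsingleton (V k)
  · refine ⟨fun _ _ => 0, RepIso.of_subsingleton _ _ hV fun k _ => ?_⟩
    have : IsEmpty (LIdx n fun _ _ => 0) := ⟨fun x => x.2.elim0⟩
    infer_instance
  push Not at hV
  obtain ⟨p, q, hpq, hqn, U, hU, hUq, hsplit⟩ :=
    exists_repIso_IpqMap_prodMap Φ (by simpa only [not_subsingleton_iff_nontrivial] using hV)
  obtain ⟨s, hs⟩ := exists_repIso_laceMap n fun k => (Φ k).restrict (hU k)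
  exact ⟨incr p q s,
    hsplit.symm.trans (((RepIso.refl _).prodMap hs).trans (repIso_laceMap_incr hpq hqn s))⟩
termination_by ∑ k ∈ Finset.range (n + 1), finrank ℂ (V k)
decreasing_by
  exact Finset.sum_lt_sum (fun k _ => Submodule.finrank_le (U k))
    ⟨q, Finset.mem_range.mpr (by omega), Submodule.finrank_lt hUq⟩

/-- every representation of the equioriented `A_{n+1}` quiver on
finite-dimensional complex vector spaces `V 0, …, V n` is isomorphic to a direct sum
`⊕_{0 ≤ p ≤ q ≤ n} I_{p,q}^{⊕ s p q}` for some array `s` of natural numbers. -/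
theorem rep_iso_directSum_Ipq (n : ℕ) (V : ℕ → Type*) [∀ i, AddCommGroup (V i)]
    [∀ i, Module ℂ (V i)] [∀ i, FiniteDimensional ℂ (V i)] (φ : HomSp n V) :
    ∃ s : ℕ → ℕ → ℕ, ∃ e : ∀ k : Fin (n + 1), V (k : ℕ) ≃ₗ[ℂ] LaceSpace n s (k : ℕ),
      ∀ i : Fin n,
        (laceMap n s (i : ℕ)).comp (e i.castSucc).toLinearMap =
          (e i.succ).toLinearMap.comp (φ i) := by
  obtain ⟨s, e, he⟩ :=
    exists_repIso_laceMap n fun k => if h : k < n then φ ⟨k, h⟩ else 0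
  exact ⟨s, e, fun i => by simpa [i.isLt] using he i⟩
end

section
/- If ⊕_{0≤p≤q≤n} I_{p,q}^{⊕ s_{pq}} and ⊕_{0≤p≤q≤n} I_{p,q}^{⊕ t_{pq}} are isomorphic as representations of the equioriented A_{n+1} quiver, where s and t are arrays of natural numbers, then s_{pq} = t_{pq} for all 0 ≤ p ≤ q ≤ n. -/
open Module

instance fintypePQ (n : ℕ) : Fintype {pq : ℕ × ℕ // pq.1 ≤ pq.2 ∧ pq.2 ≤ n} :=
  Fintype.subtype
    ((Finset.range (n + 1) ×ˢ Finset.range (n + 1)).filter fun pq => pq.1 ≤ pq.2 ∧ pq.2 ≤ n)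
    (by
      intro x
      simp only [Finset.mem_filter, Finset.mem_product, Finset.mem_range]
      omega)

lemma ipq_coe_eq_zero {a b k : ℕ} (h : ¬(a ≤ k ∧ k ≤ b)) (x : IpqSp a b k) : (x : ℂ) = 0 := by
  have hx := x.2
  simp only [IpqSp, if_neg h, Submodule.mem_bot] at hx
  exact hx

/-- The composite structure map `I_{a,b}(p) → I_{a,b}(q)` written in closed form. -/
noncomputable def ipqComp (a b p q : ℕ) : IpqSp a b p →ₗ[ℂ] IpqSp a b q :=
  LinearMap.codRestrict _
    (if a ≤ q ∧ q ≤ b then (IpqSp a b p).subtype else 0)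
    (by
      intro x
      split_ifs with h
      · simp [IpqSp, h]
      · simp)

lemma ipqComp_coe (a b p q : ℕ) (x : IpqSp a b p) :
    ((ipqComp a b p q x : IpqSp a b q) : ℂ) = if a ≤ q ∧ q ≤ b then (x : ℂ) else 0 := by
  simp only [ipqComp, LinearMap.codRestrict_apply]
  split_ifs <;> simp

lemma ipqMap_coe (a b k : ℕ) (x : IpqSp a b k) :
    ((IpqMap a b k x : IpqSp a b (k + 1)) : ℂ) = if a ≤ k + 1 ∧ k + 1 ≤ b then (x : ℂ) else 0 := by
  simp only [IpqMap, LinearMap.codRestrict_apply]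
  split_ifs <;> simp

/-- The composite structure map of the direct sum representation, in closed form. -/
noncomputable def bigMap (n : ℕ) (s : ℕ → ℕ → ℕ) (p q : ℕ) :
    LaceSpace n s p →ₗ[ℂ] LaceSpace n s q :=
  LinearMap.pi fun x => (ipqComp x.1.1.1 x.1.1.2 p q).comp (LinearMap.proj x)

lemma bigMap_self (n : ℕ) (s : ℕ → ℕ → ℕ) (p : ℕ) :
    bigMap n s p p = LinearMap.id := by
  apply LinearMap.ext; intro w
  funext x
  apply Subtype.ext
  by_cases h : x.1.1.1 ≤ p ∧ p ≤ x.1.1.2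
  · simp [bigMap, ipqComp_coe, h]
  · simp [bigMap, ipqComp_coe, h, ipq_coe_eq_zero h]

lemma bigMap_step (n : ℕ) (s : ℕ → ℕ → ℕ) (p q : ℕ) (hpq : p ≤ q) :
    bigMap n s p (q + 1) = (laceMap n s q).comp (bigMap n s p q) := by
  apply LinearMap.ext; intro w
  funext x
  apply Subtype.ext
  simp only [bigMap, laceMap, LinearMap.pi_apply, LinearMap.comp_apply, LinearMap.proj_apply,
    ipqComp_coe, ipqMap_coe]
  by_cases c : x.1.1.1 ≤ q + 1 ∧ q + 1 ≤ x.1.1.2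
  · rw [if_pos c, if_pos c]
    by_cases c2 : x.1.1.1 ≤ q ∧ q ≤ x.1.1.2
    · rw [if_pos c2]
    · rw [if_neg c2, ipq_coe_eq_zero (show ¬(x.1.1.1 ≤ p ∧ p ≤ x.1.1.2) by omega) (w x)]
  · rw [if_neg c, if_neg c]

lemma range_bigMap (n : ℕ) (s : ℕ → ℕ → ℕ) (p q : ℕ) :
    LinearMap.range (bigMap n s p q) =
      Submodule.pi Set.univ (fun x : LIdx n s => LinearMap.range (ipqComp x.1.1.1 x.1.1.2 p q)) := by
  ext v
  simp only [LinearMap.mem_range, Submodule.mem_pi, Set.mem_univ, forall_true_left]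
  constructor
  · rintro ⟨w, rfl⟩ x
    exact ⟨w x, rfl⟩
  · intro hv
    choose w hw using hv
    exact ⟨w, funext hw⟩

/-- The submodule `Submodule.pi Set.univ p` is linearly equivalent to the product of the `p i`. -/
def piSubmoduleEquiv {ι : Type*} {M : ι → Type*} [∀ i, AddCommGroup (M i)]
    [∀ i, Module ℂ (M i)] (p : ∀ i, Submodule ℂ (M i)) :
    (Submodule.pi (Set.univ : Set ι) p) ≃ₗ[ℂ] ∀ i, p i where
  toFun v := fun i => ⟨v.1 i, Submodule.mem_pi.mp v.2 i (Set.mem_univ i)⟩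
  map_add' _ _ := rfl
  map_smul' _ _ := rfl
  invFun f := ⟨fun i => f i, Submodule.mem_pi.mpr fun i _ => (f i).2⟩
  left_inv _ := rfl
  right_inv _ := rfl

lemma finrank_pi_submodule {ι : Type*} [Fintype ι] {M : ι → Type*} [∀ i, AddCommGroup (M i)]
    [∀ i, Module ℂ (M i)] [∀ i, FiniteDimensional ℂ (M i)] (p : ∀ i, Submodule ℂ (M i)) :
    finrank ℂ (Submodule.pi (Set.univ : Set ι) p) = ∑ i, finrank ℂ (p i) := by
  rw [(piSubmoduleEquiv p).finrank_eq, Module.finrank_pi_fintype]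

lemma finrank_range_ipqComp (a b p q : ℕ) (hab : a ≤ b) (hpq : p ≤ q) :
    finrank ℂ (LinearMap.range (ipqComp a b p q)) = if a ≤ p ∧ q ≤ b then 1 else 0 := by
  by_cases h : a ≤ p ∧ q ≤ b
  · rw [if_pos h]
    have hq : a ≤ q ∧ q ≤ b := ⟨le_trans h.1 hpq, h.2⟩
    have hrange : LinearMap.range (ipqComp a b p q) = ⊤ := by
      rw [LinearMap.range_eq_top]
      intro y
      refine ⟨⟨(y : ℂ), ?_⟩, ?_⟩
      · simp [IpqSp, h.1, le_trans hpq h.2]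
      · apply Subtype.ext
        rw [ipqComp_coe, if_pos hq]
    rw [hrange, finrank_top]
    rw [show IpqSp a b q = ⊤ from if_pos hq]
    simp
  · rw [if_neg h]
    have hzero : ipqComp a b p q = 0 := by
      apply LinearMap.ext; intro x
      apply Subtype.ext
      rw [ipqComp_coe]
      by_cases c : a ≤ q ∧ q ≤ b
      · rw [if_pos c, ipq_coe_eq_zero (by omega) x]
        rfl
      · rw [if_neg c]; rfl
    rw [hzero, LinearMap.range_zero, finrank_bot]

/-- The counting function: `N u p q` is the number of summands `I_{a,b}` (with multiplicity
`u a b`) with `a < p` and `q ≤ b`. -/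
def Ncount (n : ℕ) (u : ℕ → ℕ → ℕ) (p q : ℕ) : ℕ :=
  ∑ pq : {pq : ℕ × ℕ // pq.1 ≤ pq.2 ∧ pq.2 ≤ n},
    if pq.1.1 < p ∧ q ≤ pq.1.2 then u pq.1.1 pq.1.2 else 0

lemma finrank_range_bigMap (n : ℕ) (s : ℕ → ℕ → ℕ) (p q : ℕ) (hpq : p ≤ q) :
    finrank ℂ (LinearMap.range (bigMap n s p q)) = Ncount n s (p + 1) q := by
  rw [range_bigMap, finrank_pi_submodule]
  rw [show (∑ x : LIdx n s, finrank ℂ (LinearMap.range (ipqComp x.1.1.1 x.1.1.2 p q)))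
      = ∑ x : LIdx n s, (if x.1.1.1 < p + 1 ∧ q ≤ x.1.1.2 then 1 else 0) from
    Finset.sum_congr rfl fun x _ => by
      rw [finrank_range_ipqComp _ _ _ _ x.1.2.1 hpq]
      congr 1
      simp only [eq_iff_iff]
      omega]
  rw [← Finset.univ_sigma_univ, Finset.sum_sigma]
  unfold Ncount
  apply Finset.sum_congr rfl
  intro pq _
  by_cases c : pq.1.1 < p + 1 ∧ q ≤ pq.1.2
  · simp [c]
  · simp [c]

lemma Ncount_zero (n : ℕ) (u : ℕ → ℕ → ℕ) (q : ℕ) : Ncount n u 0 q = 0 := by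
  unfold Ncount
  apply Finset.sum_eq_zero
  intro pq _
  rw [if_neg (by omega)]

lemma Ncount_gt (n : ℕ) (u : ℕ → ℕ → ℕ) (p q : ℕ) (hq : n < q) : Ncount n u p q = 0 := by
  unfold Ncount
  apply Finset.sum_eq_zero
  intro pq _
  rw [if_neg (by have := pq.2.2; omega)]

lemma Ncount_ident (n : ℕ) (u : ℕ → ℕ → ℕ) (p q : ℕ) (hpq : p ≤ q) (hq : q ≤ n) :
    Ncount n u (p + 1) q + Ncount n u p (q + 1) =
      u p q + Ncount n u p q + Ncount n u (p + 1) (q + 1) := by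
  unfold Ncount
  have hupq : u p q = ∑ pq : {pq : ℕ × ℕ // pq.1 ≤ pq.2 ∧ pq.2 ≤ n},
      if pq.1.1 = p ∧ pq.1.2 = q then u p q else 0 := by
    rw [Finset.sum_eq_single (⟨(p, q), ⟨hpq, hq⟩⟩ : {pq : ℕ × ℕ // pq.1 ≤ pq.2 ∧ pq.2 ≤ n})]
    · simp
    · rintro ⟨⟨a, b⟩, hab⟩ _ hne
      rw [if_neg]
      intro hc
      exact hne (Subtype.ext (Prod.ext_iff.mpr ⟨hc.1, hc.2⟩))
    · intro h
      exact absurd (Finset.mem_univ _) h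
  rw [hupq, ← Finset.sum_add_distrib, ← Finset.sum_add_distrib, ← Finset.sum_add_distrib]
  apply Finset.sum_congr rfl
  rintro ⟨⟨a, b⟩, hab⟩ _
  simp only
  have key : ∀ (c : Prop) [Decidable c] (v : ℕ), (if c then v else 0) = (if c then 1 else 0) * v := by
    intro c _ v
    split_ifs <;> simp
  by_cases h1 : a = p ∧ b = q
  · obtain ⟨rfl, rfl⟩ := h1
    rw [key (a < a + 1 ∧ b ≤ b), key (a < a ∧ b + 1 ≤ b), key (a = a ∧ b = b),
      key (a < a ∧ b ≤ b), key (a < a + 1 ∧ b + 1 ≤ b), ← add_mul, ← add_mul, ← add_mul]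
    congr 1
    split_ifs <;> omega
  · rw [if_neg h1, key (a < p + 1 ∧ q ≤ b), key (a < p ∧ q + 1 ≤ b), key (a < p ∧ q ≤ b),
      key (a < p + 1 ∧ q + 1 ≤ b), zero_add, ← add_mul, ← add_mul]
    congr 1
    split_ifs <;> omega

/-- if `⊕_{0 ≤ p ≤ q ≤ n} I_{p,q}^{⊕ s p q}` and
`⊕_{0 ≤ p ≤ q ≤ n} I_{p,q}^{⊕ t p q}` are isomorphic as representations of the
equioriented `A_{n+1}` quiver, then `s p q = t p q` for all `0 ≤ p ≤ q ≤ n`. -/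
theorem directSum_Ipq_multiplicities_unique (n : ℕ) (s t : ℕ → ℕ → ℕ)
    (e : ∀ k : Fin (n + 1), LaceSpace n s (k : ℕ) ≃ₗ[ℂ] LaceSpace n t (k : ℕ))
    (he : ∀ i : Fin n,
      (laceMap n t (i : ℕ)).comp (e i.castSucc).toLinearMap =
        (e i.succ).toLinearMap.comp (laceMap n s (i : ℕ))) :
    ∀ p q : ℕ, p ≤ q → q ≤ n → s p q = t p q := by
  -- intertwining of the composite maps
  have intertwine : ∀ p : ℕ, p ≤ n → ∀ q : ℕ, ∀ hpq : p ≤ q, ∀ hq : q ≤ n,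
      ((e ⟨q, Nat.lt_succ_of_le hq⟩).toLinearMap).comp (bigMap n s p q) =
        (bigMap n t p q).comp (e ⟨p, Nat.lt_succ_of_le (le_trans hpq hq)⟩).toLinearMap := by
    intro p hp q hq
    induction q, hq using Nat.le_induction with
    | base =>
      intro hq
      rw [bigMap_self, bigMap_self, LinearMap.comp_id, LinearMap.id_comp]
    | succ q hq ih =>
      intro hq1
      have hqn : q ≤ n := by omega
      have Ih := ih hqn
      have key := he ⟨q, by omega⟩
      simp only [Fin.castSucc_mk, Fin.succ_mk] at key
      rw [bigMap_step n s p q hq, bigMap_step n t p q hq, ← LinearMap.comp_assoc, ← key,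
        LinearMap.comp_assoc, Ih, ← LinearMap.comp_assoc]
  -- equality of ranks
  have rank_eq : ∀ p q : ℕ, p ≤ q → q ≤ n → Ncount n s (p + 1) q = Ncount n t (p + 1) q := by
    intro p q hpq hq
    rw [← finrank_range_bigMap n s p q hpq, ← finrank_range_bigMap n t p q hpq]
    have h := intertwine p (le_trans hpq hq) q hpq hq
    calc finrank ℂ (LinearMap.range (bigMap n s p q))
        = finrank ℂ (LinearMap.range
            (((e ⟨q, Nat.lt_succ_of_le hq⟩).toLinearMap).comp (bigMap n s p q))) := by
          rw [LinearMap.range_comp]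
          exact (LinearEquiv.finrank_map_eq (e ⟨q, Nat.lt_succ_of_le hq⟩) _).symm
      _ = finrank ℂ (LinearMap.range ((bigMap n t p q).comp
            (e ⟨p, Nat.lt_succ_of_le (le_trans hpq hq)⟩).toLinearMap)) := by rw [h]
      _ = finrank ℂ (LinearMap.range (bigMap n t p q)) := by
          rw [LinearMap.range_comp, LinearEquiv.range, Submodule.map_top]
  -- all relevant counts agree
  have Hpq : ∀ p q : ℕ, p ≤ q + 1 → Ncount n s p q = Ncount n t p q := by
    intro p q hpq
    cases p with
    | zero => rw [Ncount_zero, Ncount_zero]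
    | succ p' =>
      by_cases hq : q ≤ n
      · exact rank_eq p' q (by omega) hq
      · rw [Ncount_gt n s _ q (by omega), Ncount_gt n t _ q (by omega)]
  intro p q hpq hq
  have Is := Ncount_ident n s p q hpq hq
  have It := Ncount_ident n t p q hpq hq
  have h1 := Hpq (p + 1) q (by omega)
  have h2 := Hpq p (q + 1) (by omega)
  have h3 := Hpq p q (by omega)
  have h4 := Hpq (p + 1) (q + 1) (by omega)
  omega
end

section
/- If L is an invertible lower-triangular d × d complex matrix and φ, ψ ∈ Hom satisfy L · Z(φ) = Z(ψ), then L is the identity matrix and φ = ψ. Consequently, the composition of the Zelevinsky map with the quotient by left multiplication by invertible lower-triangular matrices is injective: Z(φ) and Z(ψ) lie in the same coset only when φ = ψ. -/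
/-- The space of representations of the equioriented `A_{n+1}` quiver on
`ℂ^{d 0}, …, ℂ^{d n}` (bases fixed), as tuples of matrices: the `i`-th component is the
matrix of the map `φ_{i+1} : V i → V (i+1)`. -/
abbrev MHom (n : ℕ) (d : ℕ → ℕ) : Type :=
  ∀ i : Fin n, Matrix (Fin (d ((i : ℕ) + 1))) (Fin (d (i : ℕ))) ℂ

/-- The matrix of the composite map `φ_{i → j} : V i → V j` (the identity when `i = j`,
junk when `j < i` or the needed maps are out of range). -/
noncomputable def mComp {n : ℕ} {d : ℕ → ℕ} (φ : MHom n d) (i : ℕ) :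
    (j : ℕ) → Matrix (Fin (d j)) (Fin (d i)) ℂ
  | 0 => if h : i = 0 then (by subst h; exact 1) else 0
  | (j + 1) =>
      if h : i = j + 1 then (by subst h; exact 1)
      else if hj : j < n then (φ ⟨j, hj⟩) * (mComp φ i j) else 0

/-- `d = r 0 + ⋯ + r n`, the total dimension. -/
def Dtot (n : ℕ) (d : ℕ → ℕ) : ℕ := ∑ k ∈ Finset.range (n + 1), d k

open Classical in
/-- The block index of position `t` in a sequence of consecutive blocks of sizes
`d 0, d 1, d 2, …`: the least `i` with `t < d 0 + ⋯ + d i` (junk if there is none). -/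
noncomputable def bIdx (d : ℕ → ℕ) (t : ℕ) : ℕ :=
  if h : ∃ i, t < ∑ k ∈ Finset.range (i + 1), d k then Nat.find h else 0

/-- The offset of position `t` within its block, for a sequence of consecutive blocks of
sizes `d 0, d 1, d 2, …`. -/
noncomputable def bOff (d : ℕ → ℕ) (t : ℕ) : ℕ := t - ∑ k ∈ Finset.range (bIdx d t), d k

/-- The Zelevinsky map: `ZMat n d φ` is the `Dtot n d × Dtot n d` block matrix whose block
rows have heights `d 0, …, d n` top to bottom, whose block columns have widths
`d n, …, d 0` left to right (block column `j` has width `d j`, labelled right to left),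
with identity blocks `1` in block position `(i, i)`, the transpose of the matrix `φ_{i+1}`
in block position `(i, i+1)`, and zero blocks elsewhere. -/
noncomputable def ZMat (n : ℕ) (d : ℕ → ℕ) (φ : MHom n d) :
    Matrix (Fin (Dtot n d)) (Fin (Dtot n d)) ℂ := fun t c =>
  -- row block `i`, row `a` within it; column block label `j = n - k` where `k` is the
  -- physical block index from the left, column `b` within it
  let i : ℕ := bIdx d (t : ℕ)
  let a : ℕ := bOff d (t : ℕ)
  let j : ℕ := n - bIdx (fun m => d (n - m)) (c : ℕ)
  let b : ℕ := bOff (fun m => d (n - m)) (c : ℕ)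
  if j = i then (if a = b then 1 else 0)
  else if j = i + 1 then
    (if h : i < n ∧ b < d (i + 1) ∧ a < d i then φ ⟨i, h.1⟩ ⟨b, h.2.1⟩ ⟨a, h.2.2⟩ else 0)
  else 0

namespace ZelAux

/-- Partial sums of block sizes. -/
def bS (d : ℕ → ℕ) (i : ℕ) : ℕ := ∑ k ∈ Finset.range i, d k

lemma bS_mono (d : ℕ → ℕ) {i j : ℕ} (h : i ≤ j) : bS d i ≤ bS d j :=
  Finset.sum_le_sum_of_subset (Finset.range_subset_range.2 h)

lemma bS_succ (d : ℕ → ℕ) (i : ℕ) : bS d (i + 1) = bS d i + d i :=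
  Finset.sum_range_succ d i

lemma bIdx_add (d : ℕ → ℕ) (i a : ℕ) (ha : a < d i) : bIdx d (bS d i + a) = i := by
  have hex : ∃ m, bS d i + a < ∑ k ∈ Finset.range (m + 1), d k :=
    ⟨i, by show bS d i + a < bS d (i + 1); rw [bS_succ]; omega⟩
  rw [bIdx, dif_pos hex, Nat.find_eq_iff]
  constructor
  · show bS d i + a < bS d (i + 1); rw [bS_succ]; omega
  · intro m hm
    show ¬ bS d i + a < bS d (m + 1)
    have := bS_mono d (show m + 1 ≤ i from hm)
    omega

lemma bOff_add (d : ℕ → ℕ) (i a : ℕ) (ha : a < d i) : bOff d (bS d i + a) = a := by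
  rw [bOff, bIdx_add d i a ha]
  show bS d i + a - bS d i = a
  omega

lemma decomp (d : ℕ → ℕ) {n t : ℕ} (ht : t < Dtot n d) :
    bIdx d t ≤ n ∧ bOff d t < d (bIdx d t) ∧ bS d (bIdx d t) + bOff d t = t := by
  have hex : ∃ m, t < ∑ k ∈ Finset.range (m + 1), d k := ⟨n, ht⟩
  have hi : bIdx d t = Nat.find hex := by rw [bIdx, dif_pos hex]
  have h1 : t < bS d (Nat.find hex + 1) := Nat.find_spec hex
  have h2 : bS d (Nat.find hex) ≤ t := by
    cases hf : Nat.find hex with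
    | zero => simpa [bS] using Nat.zero_le t
    | succ m =>
      have hmin : ¬ t < bS d (m + 1) := Nat.find_min hex (by omega)
      omega
  have h3 : Nat.find hex ≤ n := Nat.find_min' hex ht
  have h4 : bOff d t = t - bS d (Nat.find hex) := by rw [bOff, hi]; rfl
  rw [bS_succ] at h1
  refine ⟨?_, ?_, ?_⟩ <;> simp only [hi, h4] <;> omega

lemma Dtot_rev (n : ℕ) (d : ℕ → ℕ) : Dtot n (fun m => d (n - m)) = Dtot n d := by
  show ∑ k ∈ Finset.range (n + 1), d (n - k) = ∑ k ∈ Finset.range (n + 1), d k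
  have := Finset.sum_range_reflect d (n + 1)
  simpa using this

lemma lt_Dtot (d : ℕ → ℕ) {n i a : ℕ} (hi : i ≤ n) (ha : a < d i) :
    bS d i + a < Dtot n d := by
  have h1 : bS d (i + 1) ≤ bS d (n + 1) := bS_mono d (by omega)
  have h2 := bS_succ d i
  show bS d i + a < bS d (n + 1)
  omega

/-- Column reindexing sending the (block `j`, offset `b`) position in the standard block
structure to the physical position of (label `j`, offset `b`) in `ZMat`'s columns. -/
noncomputable def eF (n : ℕ) (d : ℕ → ℕ) (c : Fin (Dtot n d)) : Fin (Dtot n d) :=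
  ⟨bS (fun m => d (n - m)) (n - bIdx d (c : ℕ)) + bOff d (c : ℕ), by
    have h := decomp d c.2
    have h1 : bOff d (c : ℕ) < (fun m => d (n - m)) (n - bIdx d (c : ℕ)) := by
      show bOff d (c : ℕ) < d (n - (n - bIdx d (c : ℕ)))
      rw [Nat.sub_sub_self h.1]; exact h.2.1
    have h2 := lt_Dtot (fun m => d (n - m)) (show n - bIdx d (c : ℕ) ≤ n by omega) h1
    rwa [Dtot_rev] at h2⟩

lemma Z_e {n : ℕ} {d : ℕ → ℕ} (χ : MHom n d) (t c : Fin (Dtot n d)) :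
    ZMat n d χ t (eF n d c) =
      (if bIdx d (c : ℕ) = bIdx d (t : ℕ) then
        (if bOff d (t : ℕ) = bOff d (c : ℕ) then 1 else 0)
      else if bIdx d (c : ℕ) = bIdx d (t : ℕ) + 1 then
        (if h : bIdx d (t : ℕ) < n ∧ bOff d (c : ℕ) < d (bIdx d (t : ℕ) + 1) ∧
            bOff d (t : ℕ) < d (bIdx d (t : ℕ))
         then χ ⟨_, h.1⟩ ⟨_, h.2.1⟩ ⟨_, h.2.2⟩ else 0)
      else 0) := by
  have hc := decomp d c.2
  have hlt : bOff d (c : ℕ) < (fun m => d (n - m)) (n - bIdx d (c : ℕ)) := by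
    show bOff d (c : ℕ) < d (n - (n - bIdx d (c : ℕ)))
    rw [Nat.sub_sub_self hc.1]; exact hc.2.1
  have hbi : bIdx (fun m => d (n - m)) ((eF n d c : Fin (Dtot n d)) : ℕ) =
      n - bIdx d (c : ℕ) :=
    bIdx_add (fun m => d (n - m)) (n - bIdx d (c : ℕ)) (bOff d (c : ℕ)) hlt
  have hbo : bOff (fun m => d (n - m)) ((eF n d c : Fin (Dtot n d)) : ℕ) =
      bOff d (c : ℕ) :=
    bOff_add (fun m => d (n - m)) (n - bIdx d (c : ℕ)) (bOff d (c : ℕ)) hlt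
  simp only [ZMat, hbi, hbo, Nat.sub_sub_self hc.1]

lemma U_diag {n : ℕ} {d : ℕ → ℕ} (χ : MHom n d) (t : Fin (Dtot n d)) :
    ZMat n d χ t (eF n d t) = 1 := by
  rw [Z_e]; simp

lemma U_upper {n : ℕ} {d : ℕ → ℕ} (χ : MHom n d) (t c : Fin (Dtot n d))
    (hct : (c : ℕ) < (t : ℕ)) : ZMat n d χ t (eF n d c) = 0 := by
  obtain ⟨hc1, hc2, hc3⟩ := decomp d c.2
  obtain ⟨ht1, ht2, ht3⟩ := decomp d t.2
  have hsucc := bS_succ d (bIdx d (t : ℕ))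
  rw [Z_e]
  split_ifs with h1 h2 h3 h4
  all_goals first
    | rfl
    | (exfalso; rw [h1] at hc3; omega)
    | (exfalso; rw [h3] at hc3; omega)

lemma Z_entry {n : ℕ} {d : ℕ → ℕ} (χ : MHom n d) (i : Fin n)
    (p : Fin (d ((i : ℕ) + 1))) (q : Fin (d (i : ℕ))) :
    ZMat n d χ ⟨bS d (i : ℕ) + (q : ℕ), lt_Dtot d (by omega) q.2⟩
      (eF n d ⟨bS d ((i : ℕ) + 1) + (p : ℕ), lt_Dtot d (by omega) p.2⟩) = χ i p q := by
  rw [Z_e]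
  have h1 : bIdx d ((⟨bS d (i : ℕ) + (q : ℕ), lt_Dtot d (by omega) q.2⟩ :
      Fin (Dtot n d)) : ℕ) = (i : ℕ) := bIdx_add d (i : ℕ) (q : ℕ) q.2
  have h2 : bOff d ((⟨bS d (i : ℕ) + (q : ℕ), lt_Dtot d (by omega) q.2⟩ :
      Fin (Dtot n d)) : ℕ) = (q : ℕ) := bOff_add d (i : ℕ) (q : ℕ) q.2
  have h3 : bIdx d ((⟨bS d ((i : ℕ) + 1) + (p : ℕ), lt_Dtot d (by omega) p.2⟩ :
      Fin (Dtot n d)) : ℕ) = (i : ℕ) + 1 := bIdx_add d ((i : ℕ) + 1) (p : ℕ) p.2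
  have h4 : bOff d ((⟨bS d ((i : ℕ) + 1) + (p : ℕ), lt_Dtot d (by omega) p.2⟩ :
      Fin (Dtot n d)) : ℕ) = (p : ℕ) := bOff_add d ((i : ℕ) + 1) (p : ℕ) p.2
  rw [h1, h2, h3, h4, if_neg (by omega), if_pos rfl, dif_pos ⟨i.2, p.2, q.2⟩]

end ZelAux

/-- if an invertible lower-triangular matrix `L` satisfies
`L * Z(φ) = Z(ψ)` for `φ, ψ ∈ Hom`, then `L = 1` and `φ = ψ`; consequently `Z(φ)` and
`Z(ψ)` lie in the same coset for left multiplication by invertible lower-triangular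
matrices only when `φ = ψ`. -/
theorem zelevinsky_lowerTriangular_injective (n : ℕ) (d : ℕ → ℕ)
    (L : Matrix (Fin (Dtot n d)) (Fin (Dtot n d)) ℂ) (hL : IsUnit L)
    (hlow : ∀ s t : Fin (Dtot n d), s < t → L s t = 0)
    (φ ψ : MHom n d) (h : L * ZMat n d φ = ZMat n d ψ) :
    L = 1 ∧ φ = ψ := by
  classical
  have H : ∀ m : ℕ, ∀ t : Fin (Dtot n d), (t : ℕ) < m → ∀ s : Fin (Dtot n d), ¬ s < t →
      L s t = (1 : Matrix (Fin (Dtot n d)) (Fin (Dtot n d)) ℂ) s t := by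
    intro m
    induction m with
    | zero => intro t ht; omega
    | succ m IHm =>
      intro t htm s hst
      have IH : ∀ c : Fin (Dtot n d), c < t → ∀ s : Fin (Dtot n d), ¬ s < c →
          L s c = (1 : Matrix (Fin (Dtot n d)) (Fin (Dtot n d)) ℂ) s c := by
        intro c hct
        exact IHm c (by have := Fin.lt_def.1 hct; omega)
      have h1 : (L * ZMat n d φ) s (ZelAux.eF n d t) = ZMat n d ψ s (ZelAux.eF n d t) := by
        rw [h]
      rw [Matrix.mul_apply] at h1
      have h2 : ∑ c, L s c * ZMat n d φ c (ZelAux.eF n d t) = L s t := by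
        rw [Finset.sum_eq_single t]
        · rw [ZelAux.U_diag, mul_one]
        · intro c _ hc
          rcases lt_or_gt_of_ne (Fin.val_ne_of_ne hc) with hlt | hgt
          · have hcs : ¬ s < c := by
              intro hs
              exact hst (lt_trans hs (Fin.lt_def.2 hlt))
            rw [IH c (Fin.lt_def.2 hlt) s hcs, Matrix.one_apply_ne, zero_mul]
            intro hsc
            exact absurd hsc.symm (ne_of_lt (lt_of_lt_of_le (Fin.lt_def.2 hlt)
              (not_lt.1 hst)))
          · rw [ZelAux.U_upper φ c t hgt, mul_zero]
        · intro ht; exact absurd (Finset.mem_univ t) ht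
      have h3 : ZMat n d ψ s (ZelAux.eF n d t) =
          (1 : Matrix (Fin (Dtot n d)) (Fin (Dtot n d)) ℂ) s t := by
        by_cases hs : s = t
        · subst hs
          rw [ZelAux.U_diag, Matrix.one_apply_eq]
        · have hts : (t : ℕ) < (s : ℕ) :=
            Fin.lt_def.1 (lt_of_le_of_ne (not_lt.1 hst) (Ne.symm hs))
          rw [ZelAux.U_upper ψ s t hts, Matrix.one_apply_ne hs]
      rw [← h2, h1, h3]
  have key : ∀ t : Fin (Dtot n d), ∀ s : Fin (Dtot n d), ¬ s < t →
      L s t = (1 : Matrix (Fin (Dtot n d)) (Fin (Dtot n d)) ℂ) s t :=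
    fun t => H ((t : ℕ) + 1) t (by omega)
  have hL1 : L = 1 := by
    ext s t
    by_cases hst : s < t
    · rw [hlow s t hst, Matrix.one_apply_ne (ne_of_lt hst)]
    · exact key t s hst
  refine ⟨hL1, ?_⟩
  rw [hL1, Matrix.one_mul] at h
  funext i
  ext p q
  have e1 := ZelAux.Z_entry φ i p q
  have e2 := ZelAux.Z_entry ψ i p q
  rw [h] at e1
  rw [← e1, e2]
end
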